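/- arXiv:2212.13144 — 2 statements merged into one kernel-verified Lean document; each statement's English description precedes it below -/
import Mathlib

section
/- For a > 0, b > 0, λ ∈ ℝ, the generalized inverse Gaussian kernel z ↦ z^{λ-1} exp(-(a·z^{-1} + b·z)/2) is integrable on (0,∞), with integral equal to 2·(a/b)^{λ/2}·K_λ(√(ab)), where K_λ is the modified Bessel function of the second kind. -/
open MeasureTheory

/-- Modified Bessel function of the second kind (integral representation). -/
noncomputable def besselK (l x : ℝ) : ℝ :=
  ∫ t in Set.Ioi (0:ℝ), Real.exp (-x * Real.cosh t) * Real.cosh (l * t)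

section Aux

open Real Set Filter

lemma auxT (l r : ℝ) (hr : 0 < r) :
    Tendsto (fun t => r * Real.cosh t - l * t) atTop atTop := by
  have h0 : Tendsto (fun t : ℝ => t ^ 1 * Real.exp (-t)) atTop (nhds 0) :=
    Real.tendsto_pow_mul_exp_neg_atTop_nhds_zero 1
  have h1 : Tendsto (fun t : ℝ => r / 2 - l * (t * Real.exp (-t))) atTop (nhds (r / 2)) := by
    have := (h0.const_mul l).const_sub (r / 2)
    simpa using this
  have h2 : Tendsto (fun t : ℝ => Real.exp t * (r / 2 - l * (t * Real.exp (-t)))) atTop atTop :=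
    Real.tendsto_exp_atTop.atTop_mul_pos (half_pos hr) h1
  have h3 : ∀ t : ℝ, Real.exp t * (r / 2 - l * (t * Real.exp (-t))) = r / 2 * Real.exp t - l * t := by
    intro t
    rw [Real.exp_neg]
    field_simp
  have h4 : Tendsto (fun t : ℝ => r / 2 * Real.exp t - l * t) atTop atTop := h2.congr h3
  refine tendsto_atTop_mono (fun t => ?_) h4
  rw [Real.cosh_eq]
  nlinarith [Real.exp_pos (-t), Real.exp_pos t]

lemma auxIci (l r : ℝ) (hr : 0 < r) :
    IntegrableOn (fun t => Real.exp (l * t - r * Real.cosh t)) (Set.Ici 0) := by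
  rw [integrableOn_Ici_iff_integrableOn_Ioi]
  apply integrable_of_isBigO_exp_neg one_pos
  · exact (Real.continuous_exp.comp (by fun_prop)).continuousOn
  · have hT : Tendsto (fun t : ℝ => -1 * t - (l * t - r * Real.cosh t)) atTop atTop :=
      (auxT (l + 1) r hr).congr (fun t => by ring)
    exact (Real.isLittleO_exp_comp_exp_comp.2 hT).isBigO

lemma auxIic (l r : ℝ) (hr : 0 < r) :
    IntegrableOn (fun t => Real.exp (l * t - r * Real.cosh t)) (Set.Iic 0) := by
  have h2 := auxIci (-l) r hr
  have A : MeasurableEmbedding (fun x : ℝ => -x) :=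
    (Homeomorph.neg ℝ).isClosedEmbedding.measurableEmbedding
  have hpre : (fun x : ℝ => -x) ⁻¹' (Set.Iic 0) = Set.Ici 0 := by ext x; simp
  have hmap : Measure.map (fun x : ℝ => -x) ((volume : Measure ℝ).restrict (Set.Ici (0:ℝ)))
      = (volume : Measure ℝ).restrict (Set.Iic (0:ℝ)) := by
    rw [← hpre, ← Measure.restrict_map A.measurable measurableSet_Iic,
      Measure.map_neg_eq_self]
  rw [IntegrableOn, ← hmap, A.integrable_map_iff]
  have : (fun t => Real.exp (l * t - r * Real.cosh t)) ∘ (fun x : ℝ => -x)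
      = fun t => Real.exp (-l * t - r * Real.cosh t) := by
    funext t
    simp only [Function.comp_apply, Real.cosh_neg]
    congr 1
    ring
  rw [this]
  exact h2

lemma auxInt (l r : ℝ) (hr : 0 < r) :
    Integrable (fun t => Real.exp (l * t - r * Real.cosh t)) := by
  rw [← integrableOn_univ, ← Set.Iic_union_Ioi (a := (0:ℝ))]
  exact (auxIic l r hr).union ((auxIci l r hr).mono_set Set.Ioi_subset_Ici_self)

lemma auxVal (l r : ℝ) (hr : 0 < r) :
    ∫ t, Real.exp (l * t - r * Real.cosh t) = 2 * besselK l r := by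
  have hIoi := (auxIci l r hr).mono_set Set.Ioi_subset_Ici_self
  have hsplit : ∫ t, Real.exp (l * t - r * Real.cosh t)
      = (∫ t in Set.Iic (0:ℝ), Real.exp (l * t - r * Real.cosh t))
        + ∫ t in Set.Ioi (0:ℝ), Real.exp (l * t - r * Real.cosh t) :=
    (intervalIntegral.integral_Iic_add_Ioi (auxIic l r hr) hIoi).symm
  have hneg : ∫ t in Set.Iic (0:ℝ), Real.exp (l * t - r * Real.cosh t)
      = ∫ t in Set.Ioi (0:ℝ), Real.exp (l * -t - r * Real.cosh (-t)) := by
    have := integral_comp_neg_Iic (0:ℝ)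
      (fun t => Real.exp (l * -t - r * Real.cosh (-t)))
    simp only [neg_neg, neg_zero] at this
    exact this
  have hGneg : IntegrableOn (fun t => Real.exp (l * -t - r * Real.cosh (-t))) (Set.Ioi (0:ℝ)) := by
    have h2 := (auxIci (-l) r hr).mono_set Set.Ioi_subset_Ici_self
    refine h2.congr_fun (fun t _ => ?_) measurableSet_Ioi
    rw [Real.cosh_neg]; congr 1; ring
  have hpt : ∀ t : ℝ, Real.exp (l * -t - r * Real.cosh (-t)) + Real.exp (l * t - r * Real.cosh t)
      = 2 * (Real.exp (-r * Real.cosh t) * Real.cosh (l * t)) := by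
    intro t
    rw [Real.cosh_neg, Real.cosh_eq (l * t),
      show l * -t - r * Real.cosh t = -(l * t) + -(r * Real.cosh t) by ring,
      show l * t - r * Real.cosh t = l * t + -(r * Real.cosh t) by ring,
      show -r * Real.cosh t = -(r * Real.cosh t) by ring,
      Real.exp_add, Real.exp_add]
    ring
  rw [hsplit, hneg, ← integral_add hGneg hIoi]
  simp_rw [hpt]
  rw [integral_const_mul, besselK]

end Aux

open Set Filter Function in
/-- Normalization of the generalized inverse Gaussian kernel:
`∫₀^∞ z^{λ-1} e^{-(a/z + bz)/2} dz = 2 (a/b)^{λ/2} K_λ(√(ab))`. -/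
theorem stmt13 (a b l : ℝ) (ha : 0 < a) (hb : 0 < b) :
    IntegrableOn (fun z => z ^ (l - 1) * Real.exp (-(a / z + b * z) / 2)) (Set.Ioi (0:ℝ)) ∧
    (∫ z in Set.Ioi (0:ℝ), z ^ (l - 1) * Real.exp (-(a / z + b * z) / 2))
      = 2 * (a / b) ^ (l / 2) * besselK l (Real.sqrt (a * b)) := by
  set r := Real.sqrt (a * b) with hrdef
  have hr : 0 < r := Real.sqrt_pos.2 (mul_pos ha hb)
  set c := Real.sqrt (a / b) with hcdef
  have hc : 0 < c := Real.sqrt_pos.2 (div_pos ha hb)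
  set t0 := Real.log c with ht0def
  have het0 : Real.exp t0 = c := Real.exp_log hc
  have hsa : Real.sqrt a * Real.sqrt a = a := Real.mul_self_sqrt ha.le
  have hsb : Real.sqrt b * Real.sqrt b = b := Real.mul_self_sqrt hb.le
  have hsa0 : 0 < Real.sqrt a := Real.sqrt_pos.2 ha
  have hsb0 : 0 < Real.sqrt b := Real.sqrt_pos.2 hb
  have hcsplit : c = Real.sqrt a / Real.sqrt b := by rw [hcdef, Real.sqrt_div ha.le]
  have hrsplit : r = Real.sqrt a * Real.sqrt b := by rw [hrdef, Real.sqrt_mul ha.le]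
  have h1 : a = r * c := by
    rw [hcsplit, hrsplit]
    field_simp
    linear_combination (-1) * hsa
  have h2 : b * c = r := by
    rw [hcsplit, hrsplit]
    field_simp
    linear_combination (-1) * hsb
  -- the substituted integrand
  have hJshift : ∀ v : ℝ,
      Real.exp (l * (v + t0) - (a * (Real.exp (v + t0))⁻¹ + b * Real.exp (v + t0)) / 2)
        = Real.exp (l * t0) * Real.exp (l * v - r * Real.cosh v) := by
    intro v
    rw [← Real.exp_add]
    congr 1
    rw [Real.exp_add, het0, Real.cosh_eq]
    have hev : Real.exp v ≠ 0 := (Real.exp_pos v).ne'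
    have hev' : Real.exp (-v) = (Real.exp v)⁻¹ := Real.exp_neg v
    rw [hev']
    field_simp
    linear_combination (-1) * h1 + (-Real.exp v^2*c) * h2
  have himg : Real.exp '' Set.univ = Set.Ioi (0:ℝ) := by
    rw [Set.image_univ, Real.range_exp]
  have hderiv : ∀ x ∈ (Set.univ : Set ℝ), HasDerivWithinAt Real.exp (Real.exp x) Set.univ x :=
    fun x _ => (Real.hasDerivAt_exp x).hasDerivWithinAt
  have hinj : Set.InjOn Real.exp Set.univ := Real.exp_injective.injOn
  have hpt : ∀ u : ℝ, |Real.exp u| • ((Real.exp u) ^ (l - 1) *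
        Real.exp (-(a / Real.exp u + b * Real.exp u) / 2))
      = Real.exp (l * u - (a * (Real.exp u)⁻¹ + b * Real.exp u) / 2) := by
    intro u
    rw [smul_eq_mul, abs_of_pos (Real.exp_pos u),
      Real.rpow_def_of_pos (Real.exp_pos u), Real.log_exp, ← Real.exp_add, ← Real.exp_add]
    congr 1
    rw [div_eq_mul_inv a]
    ring
  have hG := auxInt l r hr
  have hJt : Integrable (fun v : ℝ =>
      Real.exp (l * (v + t0) - (a * (Real.exp (v + t0))⁻¹ + b * Real.exp (v + t0)) / 2)) := by
    have h := (hG.const_mul (Real.exp (l * t0)))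
    exact h.congr (Filter.Eventually.of_forall fun v => (hJshift v).symm)
  have hJ : Integrable (fun u : ℝ =>
      Real.exp (l * u - (a * (Real.exp u)⁻¹ + b * Real.exp u) / 2)) := by
    have h := hJt.comp_add_right (-t0)
    simpa using h
  have hint : IntegrableOn (fun z => z ^ (l - 1) * Real.exp (-(a / z + b * z) / 2))
      (Set.Ioi (0:ℝ)) := by
    rw [← himg,
      integrableOn_image_iff_integrableOn_abs_deriv_smul MeasurableSet.univ hderiv hinj]
    rw [integrableOn_univ]
    exact hJ.congr (Filter.Eventually.of_forall fun u => (hpt u).symm)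
  refine ⟨hint, ?_⟩
  have hexp : Real.exp (l * t0) = (a / b) ^ (l / 2) := by
    rw [mul_comm, ht0def, ← Real.rpow_def_of_pos hc, hcdef,
      Real.sqrt_eq_rpow, ← Real.rpow_mul (div_pos ha hb).le]
    congr 1
    ring
  calc ∫ z in Set.Ioi (0:ℝ), z ^ (l - 1) * Real.exp (-(a / z + b * z) / 2)
      = ∫ u in Set.univ, |Real.exp u| • ((Real.exp u) ^ (l - 1) *
          Real.exp (-(a / Real.exp u + b * Real.exp u) / 2)) := by
        rw [← himg, integral_image_eq_integral_abs_deriv_smul MeasurableSet.univ hderiv hinj]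
    _ = ∫ u, Real.exp (l * u - (a * (Real.exp u)⁻¹ + b * Real.exp u) / 2) := by
        rw [setIntegral_univ]
        exact integral_congr_ae (Filter.Eventually.of_forall fun u => hpt u)
    _ = ∫ v, Real.exp (l * (v + t0) - (a * (Real.exp (v + t0))⁻¹ + b * Real.exp (v + t0)) / 2) :=
        (integral_add_right_eq_self _ t0).symm
    _ = ∫ v, Real.exp (l * t0) * Real.exp (l * v - r * Real.cosh v) := by
        exact integral_congr_ae (Filter.Eventually.of_forall fun v => hJshift v)
    _ = Real.exp (l * t0) * ∫ v, Real.exp (l * v - r * Real.cosh v) := integral_const_mul _ _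
    _ = Real.exp (l * t0) * (2 * besselK l r) := by rw [auxVal l r hr]
    _ = 2 * (a / b) ^ (l / 2) * besselK l r := by rw [hexp]; ring
end

section
/- For the Beta prime density f_{a,b}(x) = Γ(a+b)/(Γ(a)Γ(b))·x^{a-1}(1+x)^{-(a+b)} on (0,∞) with 0 < a < 1/2 and b > 0, and the induced density of β where β | z ~ N(0, z) and z ~ f_{a,b}: the marginal density of β at any x with 0 < |x| ≤ E satisfies a lower bound of the form C·a·(x²)^{a - 1/2}·(x² + const)^{-(b+1/2)} for a constant C depending only on b; consequently -log(inf_{0<|x|≤E} marginal(x)) ≤ C'·((1/2 - a)·log(1/x²-term) + (b+1/2)·log(E² + const)) = O(log E + log(1/a)). -/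
/-!
Keep only the mixing variances `z ∈ [x²/4, x²/2]`, where `x²/(2z) ∈ [1, 2]`: there the normal
kernel is at least `e⁻²/√(πx²)`, and the Beta prime density, decreasing for `a ≤ 1`, is at least
its value at `x²/2`, which is `2^(1+b) R (x²)^(a-1) (x²+2)^(-(a+b))`; the window has length `x²/4`.
The normalising constant is `R = a Γ(a+b) / (Γ(a+1) Γ(b)) ≥ a · (min Γ) / Γ(b)`, because `Γ ≤ 1`
on `[1, 2]` by convexity. The lower bound is decreasing in `|x|`, so its value at `|x| = E`
bounds the infimum, and taking logarithms gives `O(log E + log (1/a))`.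
-/

open Real MeasureTheory Set

noncomputable def betaPrimePDF (a b z : ℝ) : ℝ :=
  Gamma (a + b) / (Gamma a * Gamma b) * z ^ (a - 1) * (1 + z) ^ (-(a + b))

noncomputable def gaussianKernel (x z : ℝ) : ℝ :=
  exp (-(x ^ 2) / (2 * z)) / sqrt (2 * π * z)

noncomputable def normalBetaPrimeMarginal (a b x : ℝ) : ℝ :=
  ∫ z in Ioi (0 : ℝ), gaussianKernel x z * betaPrimePDF a b z

lemma Gamma_add_one_le_one {a : ℝ} (ha : 0 ≤ a) (ha1 : a ≤ 1) : Gamma (a + 1) ≤ 1 := by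
  have := convexOn_Gamma.le_max_of_mem_Icc (x := 1) (y := 2) (by norm_num) (by norm_num)
    (z := a + 1) ⟨by linarith, by linarith⟩
  simpa [Gamma_two] using this

lemma exists_pos_mul_le_Gamma_div {b : ℝ} (hb : 0 < b) :
    ∃ c > 0, ∀ a, 0 < a → a ≤ 1 → c * a ≤ Gamma (a + b) / (Gamma a * Gamma b) := by
  obtain ⟨s₀, hs₀, hmin⟩ := exists_isMinOn_Gamma_Ioi
  have hGb := Gamma_pos_of_pos hb
  refine ⟨Gamma s₀ / Gamma b, div_pos (Gamma_pos_of_pos (by linarith [hs₀.1])) hGb,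
    fun a ha ha1 => ?_⟩
  have hGa1 : 0 < Gamma (a + 1) := Gamma_pos_of_pos (by linarith)
  calc Gamma s₀ / Gamma b * a ≤ a * Gamma (a + b) / (Gamma (a + 1) * Gamma b) := by
        rw [div_mul_eq_mul_div, div_le_div_iff₀ hGb (by positivity)]
        have hs₀pos : 0 < Gamma s₀ := Gamma_pos_of_pos (by linarith [hs₀.1])
        calc Gamma s₀ * a * (Gamma (a + 1) * Gamma b) ≤ Gamma s₀ * a * (1 * Gamma b) := by
              gcongr; exact Gamma_add_one_le_one ha.le ha1
          _ ≤ a * Gamma (a + b) * Gamma b := by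
              have : Gamma s₀ ≤ Gamma (a + b) := hmin (mem_Ioi.mpr (by linarith))
              nlinarith [mul_pos ha hGb]
    _ = Gamma (a + b) / (Gamma a * Gamma b) := by
        rw [Gamma_add_one ha.ne']; field_simp

lemma gaussianKernel_nonneg (x z : ℝ) : 0 ≤ gaussianKernel x z := by
  unfold gaussianKernel; positivity

lemma gaussianKernel_le {x z : ℝ} (hx : x ≠ 0) (hz : 0 < z) :
    gaussianKernel x z ≤ 1 / sqrt (π * x ^ 2) := by
  set u := x ^ 2 / (2 * z) with hu
  have hu0 : 0 < u := by positivity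
  have hsqrt_le_exp : sqrt u * exp (-u) ≤ 1 := by
    have : sqrt u ≤ exp u := by
      nlinarith [sq_sqrt hu0.le, sqrt_nonneg u, add_one_le_exp u]
    calc sqrt u * exp (-u) ≤ exp u * exp (-u) := by gcongr
      _ = 1 := by rw [← exp_add, add_neg_cancel, exp_zero]
  have hsplit : sqrt (π * x ^ 2) = sqrt (2 * π * z) * sqrt u := by
    rw [← sqrt_mul (by positivity), hu]; congr 1; field_simp
  rw [gaussianKernel, neg_div, ← hu, hsplit, div_le_div_iff₀ (by positivity) (by positivity)]
  nlinarith [sqrt_nonneg (2 * π * z)]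

lemma le_gaussianKernel {x z : ℝ} (hx : x ≠ 0) (hz : z ∈ Icc (x ^ 2 / 4) (x ^ 2 / 2)) :
    exp (-2) / sqrt (π * x ^ 2) ≤ gaussianKernel x z := by
  have hz0 : 0 < z := lt_of_lt_of_le (by positivity) hz.1
  unfold gaussianKernel
  refine div_le_div₀ (exp_pos _).le (exp_le_exp.2 ?_) (by positivity) (sqrt_le_sqrt ?_)
  · rw [neg_div, neg_le_neg_iff, div_le_iff₀ (by positivity)]; linarith [hz.1]
  · nlinarith [hz.2, pi_pos]

section BetaPrime

variable {a b : ℝ}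

lemma betaPrimePDF_nonneg (ha : 0 < a) (hb : 0 < b) {z : ℝ} (hz : 0 ≤ z) :
    0 ≤ betaPrimePDF a b z := by
  have := Gamma_pos_of_pos ha; have := Gamma_pos_of_pos hb
  have := Gamma_pos_of_pos (add_pos ha hb)
  unfold betaPrimePDF; positivity

lemma measurable_betaPrimePDF : Measurable (betaPrimePDF a b) := by
  unfold betaPrimePDF; fun_prop

lemma integrableOn_betaPrimePDF (ha : 0 < a) (hb : 0 < b) :
    IntegrableOn (betaPrimePDF a b) (Ioi 0) := by
  set R := Gamma (a + b) / (Gamma a * Gamma b)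
  have hR : 0 ≤ R := by
    have := Gamma_pos_of_pos ha; have := Gamma_pos_of_pos hb
    have := Gamma_pos_of_pos (add_pos ha hb); positivity
  have near_zero : IntegrableOn (betaPrimePDF a b) (Ioc 0 1) := by
    refine Integrable.mono' (((intervalIntegral.intervalIntegrable_rpow' (a := 0) (b := 1)
      (r := a - 1) (by linarith)).1).const_mul R) measurable_betaPrimePDF.aestronglyMeasurable ?_
    rw [ae_restrict_iff' measurableSet_Ioc]
    refine Filter.Eventually.of_forall fun z hz => ?_
    rw [norm_of_nonneg (betaPrimePDF_nonneg ha hb hz.1.le), betaPrimePDF]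
    exact mul_le_of_le_one_right (mul_nonneg hR (rpow_nonneg hz.1.le _))
      (rpow_le_one_of_one_le_of_nonpos (by linarith [hz.1]) (by linarith))
  have near_infty : IntegrableOn (betaPrimePDF a b) (Ioi 1) := by
    refine Integrable.mono' ((integrableOn_Ioi_rpow_of_lt (a := -b - 1) (by linarith)
      one_pos).const_mul R) measurable_betaPrimePDF.aestronglyMeasurable ?_
    rw [ae_restrict_iff' measurableSet_Ioi]
    refine Filter.Eventually.of_forall fun z (hz : 1 < z) => ?_
    have hz0 : 0 < z := one_pos.trans hz
    rw [norm_of_nonneg (betaPrimePDF_nonneg ha hb hz0.le), betaPrimePDF, mul_assoc]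
    refine mul_le_mul_of_nonneg_left ?_ hR
    calc z ^ (a - 1) * (1 + z) ^ (-(a + b)) ≤ z ^ (a - 1) * z ^ (-(a + b)) :=
          mul_le_mul_of_nonneg_left (rpow_le_rpow_of_nonpos hz0 (by linarith) (by linarith))
            (by positivity)
      _ = z ^ (-b - 1) := by rw [← rpow_add hz0]; ring_nf
  rw [← Ioc_union_Ioi_eq_Ioi zero_le_one]
  exact near_zero.union near_infty

lemma betaPrimePDF_antitoneOn (ha : 0 < a) (ha1 : a ≤ 1) (hb : 0 < b) :
    AntitoneOn (betaPrimePDF a b) (Ioi 0) := by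
  intro y (hy : 0 < y) z (hz : 0 < z) hyz
  have := Gamma_pos_of_pos ha; have := Gamma_pos_of_pos hb
  have := Gamma_pos_of_pos (add_pos ha hb)
  unfold betaPrimePDF
  refine mul_le_mul (mul_le_mul_of_nonneg_left (rpow_le_rpow_of_nonpos hy hyz (by linarith))
    (by positivity)) (rpow_le_rpow_of_nonpos (by linarith) (by linarith) (by linarith))
    (by positivity) (by positivity)

lemma betaPrimePDF_half {t : ℝ} (ht : 0 < t) :
    betaPrimePDF a b (t / 2) =
      2 ^ (1 + b) * (Gamma (a + b) / (Gamma a * Gamma b)) * t ^ (a - 1) *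
        (t + 2) ^ (-(a + b)) := by
  have h1 : (t / 2) ^ (a - 1) = t ^ (a - 1) * 2 ^ (1 - a) := by
    rw [div_rpow ht.le zero_le_two, div_eq_mul_inv, ← rpow_neg zero_le_two, neg_sub]
  have h2 : (1 + t / 2) ^ (-(a + b)) = (t + 2) ^ (-(a + b)) * 2 ^ (a + b) := by
    rw [show 1 + t / 2 = (t + 2) / 2 by ring, div_rpow (by positivity) zero_le_two,
      div_eq_mul_inv, ← rpow_neg zero_le_two, neg_neg]
  have h3 : (2 : ℝ) ^ (1 + b) = 2 ^ (1 - a) * 2 ^ (a + b) := by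
    rw [← rpow_add two_pos]; ring_nf
  rw [betaPrimePDF, h1, h2, h3]; ring

end BetaPrime

section Marginal

variable {a b x : ℝ}

lemma integrableOn_gaussianKernel_mul_betaPrimePDF (hx : x ≠ 0) (ha : 0 < a) (hb : 0 < b) :
    IntegrableOn (fun z => gaussianKernel x z * betaPrimePDF a b z) (Ioi 0) := by
  have hmeas : Measurable (gaussianKernel x) := by unfold gaussianKernel; fun_prop
  refine (integrableOn_betaPrimePDF ha hb).bdd_mul (c := 1 / sqrt (π * x ^ 2))
    hmeas.aestronglyMeasurable ?_
  rw [ae_restrict_iff' measurableSet_Ioi]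
  refine Filter.Eventually.of_forall fun z hz => ?_
  rw [norm_of_nonneg (gaussianKernel_nonneg x z)]
  exact gaussianKernel_le hx hz

lemma le_normalBetaPrimeMarginal (hx : x ≠ 0) (ha : 0 < a) (ha1 : a ≤ 1) (hb : 0 < b) :
    exp (-2) / sqrt (π * x ^ 2) * betaPrimePDF a b (x ^ 2 / 2) * (x ^ 2 / 4) ≤
      normalBetaPrimeMarginal a b x := by
  have ht : 0 < x ^ 2 := by positivity
  have hsub : Icc (x ^ 2 / 4) (x ^ 2 / 2) ⊆ Ioi 0 := fun z hz =>
    lt_of_lt_of_le (by positivity) hz.1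
  have hint := integrableOn_gaussianKernel_mul_betaPrimePDF hx ha hb
  have hpointwise : ∀ z ∈ Icc (x ^ 2 / 4) (x ^ 2 / 2),
      exp (-2) / sqrt (π * x ^ 2) * betaPrimePDF a b (x ^ 2 / 2) ≤
        gaussianKernel x z * betaPrimePDF a b z := fun z hz =>
    mul_le_mul (le_gaussianKernel hx hz)
      (betaPrimePDF_antitoneOn ha ha1 hb (hsub hz) (by simp [ht] : x ^ 2 / 2 ∈ Ioi 0) hz.2)
      (betaPrimePDF_nonneg ha hb (by positivity)) (gaussianKernel_nonneg x z)
  calc _ = exp (-2) / sqrt (π * x ^ 2) * betaPrimePDF a b (x ^ 2 / 2) *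
        volume.real (Icc (x ^ 2 / 4) (x ^ 2 / 2)) := by
          rw [Real.volume_real_Icc_of_le (by linarith)]; ring
    _ ≤ ∫ z in Icc (x ^ 2 / 4) (x ^ 2 / 2), gaussianKernel x z * betaPrimePDF a b z :=
        setIntegral_ge_of_const_le_real measurableSet_Icc measure_Icc_lt_top.ne hpointwise
          (hint.mono_set hsub)
    _ ≤ normalBetaPrimeMarginal a b x := by
        refine setIntegral_mono_set hint ?_ hsub.eventuallyLE
        rw [Filter.EventuallyLE, ae_restrict_iff' measurableSet_Ioi]
        exact Filter.Eventually.of_forall fun z (hz : 0 < z) =>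
          mul_nonneg (gaussianKernel_nonneg x z) (betaPrimePDF_nonneg ha hb hz.le)

lemma mul_rpow_le_normalBetaPrimeMarginal (hx : x ≠ 0) (ha : 0 < a) (ha' : a ≤ 1 / 2)
    (hb : 0 < b) :
    exp (-2) * 2 ^ (1 + b) / (4 * sqrt π) * (Gamma (a + b) / (Gamma a * Gamma b)) *
      (x ^ 2) ^ (a - 1 / 2) * (x ^ 2 + 2) ^ (-(b + 1 / 2)) ≤ normalBetaPrimeMarginal a b x := by
  refine le_trans ?_ (le_normalBetaPrimeMarginal hx ha (by linarith) hb)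
  have ht : 0 < x ^ 2 := by positivity
  have hR : 0 ≤ Gamma (a + b) / (Gamma a * Gamma b) := by
    have := Gamma_pos_of_pos ha; have := Gamma_pos_of_pos hb
    have := Gamma_pos_of_pos (add_pos ha hb); positivity
  have hpow : (x ^ 2) ^ (a - 1 / 2) = x ^ 2 * (x ^ 2) ^ (a - 1) / (x ^ 2) ^ (1 / 2 : ℝ) := by
    rw [eq_div_iff (by positivity), ← rpow_one_add' ht.le (by linarith), ← rpow_add ht]
    ring_nf
  have hexp : (x ^ 2 + 2) ^ (-(b + 1 / 2)) ≤ (x ^ 2 + 2) ^ (-(a + b)) :=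
    rpow_le_rpow_of_exponent_le (by linarith) (by linarith)
  rw [betaPrimePDF_half ht, sqrt_mul pi_pos.le, sqrt_eq_rpow (x ^ 2), hpow]
  calc _ ≤ exp (-2) * 2 ^ (1 + b) / (4 * sqrt π) * (Gamma (a + b) / (Gamma a * Gamma b)) *
        (x ^ 2 * (x ^ 2) ^ (a - 1) / (x ^ 2) ^ (1 / 2 : ℝ)) * (x ^ 2 + 2) ^ (-(a + b)) := by
        gcongr
    _ = _ := by field_simp

lemma exists_pos_mul_rpow_le_normalBetaPrimeMarginal (hb : 0 < b) :
    ∃ C > 0, ∀ a, 0 < a → a ≤ 1 / 2 → ∀ x ≠ 0,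
      C * a * (x ^ 2) ^ (a - 1 / 2) * (x ^ 2 + 2) ^ (-(b + 1 / 2)) ≤
        normalBetaPrimeMarginal a b x := by
  obtain ⟨c, hc, hcR⟩ := exists_pos_mul_le_Gamma_div hb
  refine ⟨exp (-2) * 2 ^ (1 + b) / (4 * sqrt π) * c, by positivity, fun a ha ha' x hx => ?_⟩
  refine le_trans ?_ (mul_rpow_le_normalBetaPrimeMarginal hx ha ha' hb)
  rw [mul_assoc _ c a]
  gcongr
  exact hcR a ha (by linarith)

end Marginal

lemma mul_rpow_sq_le_of_abs_le {C p q x E : ℝ} (hC : 0 ≤ C) (hp : p ≤ 0) (hq : q ≤ 0)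
    (hx : x ≠ 0) (hxE : |x| ≤ E) :
    C * (E ^ 2) ^ p * (E ^ 2 + 2) ^ q ≤ C * (x ^ 2) ^ p * (x ^ 2 + 2) ^ q := by
  have hsq : x ^ 2 ≤ E ^ 2 := sq_le_sq' (by linarith [neg_abs_le x]) (le_abs_self x |>.trans hxE)
  have hx2 : 0 < x ^ 2 := by positivity
  exact mul_le_mul (mul_le_mul_of_nonneg_left (rpow_le_rpow_of_nonpos hx2 hsq hp) hC)
    (rpow_le_rpow_of_nonpos (by positivity) (by linarith) hq) (by positivity) (by positivity)

lemma neg_log_sInf_image_le {α : Type*} {f : α → ℝ} {S : Set α} {L : ℝ} (hS : S.Nonempty)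
    (hL : 0 < L) (h : ∀ x ∈ S, L ≤ f x) : -log (sInf (f '' S)) ≤ -log L :=
  neg_le_neg <| log_le_log hL <| le_csInf (hS.image f) <| by
    rintro _ ⟨x, hx, rfl⟩; exact h x hx

lemma neg_log_mul_rpow_le {C a b E : ℝ} (hC : 0 < C) (ha : 0 < a) (ha' : a ≤ 1 / 2)
    (hb : 0 ≤ b) (hE : 2 ≤ E) :
    -log (C * a * (E ^ 2) ^ (a - 1 / 2) * (E ^ 2 + 2) ^ (-(b + 1 / 2))) ≤
      (|log C| + 3 * (b + 1 / 2) + 2) * (log E + log (1 / a) + 1) := by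
  have hlogE : 0 ≤ log E := log_nonneg (by linarith)
  have hloga : 0 ≤ log (1 / a) := log_nonneg (by rw [le_div_iff₀ ha]; linarith)
  have hlogE3 : log (E ^ 2 + 2) ≤ 3 * log E := by
    rw [show 3 * log E = log (E ^ 3) by rw [log_pow]; norm_num]
    exact log_le_log (by positivity) (by nlinarith)
  have hlogL : log (C * a * (E ^ 2) ^ (a - 1 / 2) * (E ^ 2 + 2) ^ (-(b + 1 / 2))) =
      log C + log a + (a - 1 / 2) * (2 * log E) - (b + 1 / 2) * log (E ^ 2 + 2) := by
    rw [log_mul (by positivity) (by positivity), log_mul (by positivity) (by positivity),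
      log_mul hC.ne' ha.ne', log_rpow (by positivity), log_rpow (by positivity), log_pow]
    push_cast; ring
  rw [hlogL, show log a = -log (1 / a) by rw [one_div, log_inv, neg_neg]]
  nlinarith [neg_le_abs (log C), abs_nonneg (log C), mul_nonneg hloga hlogE,
    mul_nonneg hb hlogE]

/-- Lower bound for the Gaussian mixture of a Beta prime mixing density with
`0 < a < 1/2`: the marginal density `m` satisfies
`m(x) ≥ C a (x²)^{a-1/2} (x² + K)^{-(b+1/2)}` for `0 < |x| ≤ E` with constants
depending only on `b`; consequently
`-log(inf_{0<|x|≤E} m(x)) = O(log E + log(1/a))`. -/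
theorem stmt17 (b : ℝ) (hb : 0 < b) :
    ∃ C > 0, ∃ K > 0, ∃ C' > 0,
      ∀ a : ℝ, 0 < a → a < 1/2 →
        let m : ℝ → ℝ := fun x => ∫ z in Set.Ioi (0:ℝ),
          Real.exp (-(x ^ 2) / (2 * z)) / Real.sqrt (2 * Real.pi * z) *
            (Real.Gamma (a + b) / (Real.Gamma a * Real.Gamma b) *
              z ^ (a - 1) * (1 + z) ^ (-(a + b)))
        (∀ E : ℝ, ∀ x : ℝ, 0 < |x| → |x| ≤ E →
          C * a * (x ^ 2) ^ (a - 1/2) * (x ^ 2 + K) ^ (-(b + 1/2)) ≤ m x) ∧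
        (∀ E : ℝ, 2 ≤ E →
          -Real.log (sInf (m '' {x | 0 < |x| ∧ |x| ≤ E}))
            ≤ C' * (Real.log E + Real.log (1 / a) + 1)) := by
  obtain ⟨C, hC, hm⟩ := exists_pos_mul_rpow_le_normalBetaPrimeMarginal hb
  refine ⟨C, hC, 2, two_pos, |log C| + 3 * (b + 1 / 2) + 2, by positivity, fun a ha ha' => ?_⟩
  refine ⟨fun E x hx _ => hm a ha ha'.le x (abs_pos.mp hx), fun E hE => ?_⟩
  refine le_trans ?_ (neg_log_mul_rpow_le hC ha ha'.le hb.le hE)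
  refine neg_log_sInf_image_le ⟨1, by norm_num, by rw [abs_one]; linarith⟩ (by positivity) fun x hx => ?_
  exact (mul_rpow_sq_le_of_abs_le (by positivity) (by linarith) (by linarith)
    (abs_pos.mp hx.1) hx.2).trans (hm a ha ha'.le x (abs_pos.mp hx.1))
end
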